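/- arXiv:2509.23319 — 3 statements merged into one kernel-verified Lean document; each statement's English description precedes it below -/
import Mathlib

section
/- Let X = ℝ² equipped with the ℓ¹ norm ‖(a, b)‖₁ = |a| + |b|. Then for every t ∈ [0, 1/2], C_Z^I(t) = t² − 2t + 1. -/
/-
Write `t • x + (1 - t) • y = ½ (x + y) - (½ - t)(x - y)`. For isosceles orthogonal `x, y` the
triangle inequality bounds its norm by `(1 - t) ‖x + y‖`, and swapping `x` and `y` gives the same
bound for the other factor, so `C_Z^I(t) ≤ (1 - t)²` in every real normed space. In `ℓ¹(2)` the pair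
`x = (1, 1)`, `y = (1, -1)` attains this bound: both factors equal `2 - 2t` and `‖x + y‖ = 2`.
-/

open Set

/-- `C_Z^I(t)`: the sup of `‖t•x + (1-t)•y‖ * ‖(1-t)•x + t•y‖ / ‖x+y‖²` over
pairs `(x, y) ≠ (0, 0)` that are isosceles orthogonal (`‖x+y‖ = ‖x-y‖`). -/
noncomputable def CZI (X : Type*) [NormedAddCommGroup X] [NormedSpace ℝ X] (t : ℝ) : ℝ :=
  sSup { r : ℝ | ∃ x y : X, (x, y) ≠ (0, 0) ∧ ‖x + y‖ = ‖x - y‖ ∧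
    r = ‖t • x + (1 - t) • y‖ * ‖(1 - t) • x + t • y‖ / ‖x + y‖ ^ 2 }

section IsoscelesOrthogonal

variable {X : Type*} [NormedAddCommGroup X] [NormedSpace ℝ X]

theorem norm_smul_add_one_sub_smul_le {x y : X} (hxy : ‖x + y‖ = ‖x - y‖) {t : ℝ}
    (ht : t ≤ 1 / 2) : ‖t • x + (1 - t) • y‖ ≤ (1 - t) * ‖x + y‖ :=
  calc ‖t • x + (1 - t) • y‖ = ‖(1 / 2 : ℝ) • (x + y) - (1 / 2 - t) • (x - y)‖ := by
        congr 1; module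
    _ ≤ ‖(1 / 2 : ℝ) • (x + y)‖ + ‖(1 / 2 - t) • (x - y)‖ := norm_sub_le _ _
    _ = (1 - t) * ‖x + y‖ := by
        rw [norm_smul, norm_smul, Real.norm_of_nonneg (by norm_num),
          Real.norm_of_nonneg (by linarith), ← hxy]
        ring

theorem CZI_ratio_le {x y : X} (hxy : ‖x + y‖ = ‖x - y‖) {t : ℝ} (ht : t ≤ 1 / 2) :
    ‖t • x + (1 - t) • y‖ * ‖(1 - t) • x + t • y‖ / ‖x + y‖ ^ 2 ≤ (1 - t) ^ 2 := by
  have hyx : ‖y + x‖ = ‖y - x‖ := by rw [add_comm, norm_sub_rev, hxy]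
  have h₁ := norm_smul_add_one_sub_smul_le hxy ht
  have h₂ := norm_smul_add_one_sub_smul_le hyx ht
  rw [add_comm y, add_comm (t • y)] at h₂
  refine div_le_of_le_mul₀ (by positivity) (sq_nonneg _) ?_
  calc ‖t • x + (1 - t) • y‖ * ‖(1 - t) • x + t • y‖
      ≤ ((1 - t) * ‖x + y‖) * ((1 - t) * ‖x + y‖) :=
        mul_le_mul h₁ h₂ (norm_nonneg _) (h₁.trans' (norm_nonneg _))
    _ = (1 - t) ^ 2 * ‖x + y‖ ^ 2 := by ring

theorem CZI_eq_of_ratio_eq {t : ℝ} (ht : t ≤ 1 / 2) {x y : X}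
    (hne : (x, y) ≠ (0, 0)) (hxy : ‖x + y‖ = ‖x - y‖)
    (hratio : ‖t • x + (1 - t) • y‖ * ‖(1 - t) • x + t • y‖ / ‖x + y‖ ^ 2 = (1 - t) ^ 2) :
    CZI X t = (1 - t) ^ 2 :=
  IsGreatest.csSup_eq ⟨⟨x, y, hne, hxy, hratio.symm⟩, by
    rintro _ ⟨x, y, -, hxy, rfl⟩
    exact CZI_ratio_le hxy ht⟩

end IsoscelesOrthogonal

theorem PiLp.norm_one_fin_two (f : PiLp 1 (fun _ : Fin 2 => ℝ)) : ‖f‖ = |f 0| + |f 1| := by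
  rw [PiLp.norm_eq_sum (by norm_num)]
  simp [Fin.sum_univ_two, Real.norm_eq_abs]

theorem stmt_3 :
    ∀ t ∈ Icc (0 : ℝ) (1 / 2),
      CZI (PiLp 1 (fun _ : Fin 2 => ℝ)) t = t ^ 2 - 2 * t + 1 := by
  rintro t ⟨-, ht⟩
  let x : PiLp 1 (fun _ : Fin 2 => ℝ) := WithLp.toLp 1 ![1, 1]
  let y : PiLp 1 (fun _ : Fin 2 => ℝ) := WithLp.toLp 1 ![1, -1]
  have hne : (x, y) ≠ (0, 0) := fun h => by
    simpa [x] using congrArg (fun p => p.1 0) h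
  have hxy : ‖x + y‖ = ‖x - y‖ := by
    simp [PiLp.norm_one_fin_two, x, y]
  have hratio : ‖t • x + (1 - t) • y‖ * ‖(1 - t) • x + t • y‖ / ‖x + y‖ ^ 2 = (1 - t) ^ 2 := by
    simp only [PiLp.norm_one_fin_two, PiLp.add_apply, PiLp.smul_apply, Matrix.cons_val_zero,
      Matrix.cons_val_one, Matrix.cons_val_fin_one, smul_eq_mul, mul_one, mul_neg, neg_sub,
      add_sub_cancel, sub_add_cancel, add_neg_cancel, abs_one, abs_zero, add_zero, x, y]
    rw [abs_of_nonpos (by linarith), abs_of_nonneg (by linarith)]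
    ring
  rw [CZI_eq_of_ratio_eq ht hne hxy hratio]
  ring
end

section
/- Let X be a nontrivial real Banach space. Then C_Z(X) = sup{ 4·C_Z^I((1 − η)/2) / (1 + η²) : η ∈ [0, 1] }. -/
open Set

/-- The Zbăganu constant `C_Z(X)`. -/
noncomputable def CZ (X : Type*) [NormedAddCommGroup X] [NormedSpace ℝ X] : ℝ :=
  sSup { r : ℝ | ∃ x y : X, (x, y) ≠ (0, 0) ∧
    r = ‖x + y‖ * ‖x - y‖ / (‖x‖ ^ 2 + ‖y‖ ^ 2) }

/-!
For an isosceles orthogonal pair `(u, v)` and any `η`, put `x = u + v` and `y = η • (u - v)`,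
so that `‖y‖ = |η| ‖x‖`. With `t = (1 - η) / 2` one has `x - y = 2 (t u + (1 - t) v)` and
`x + y = 2 ((1 - t) u + t v)`, hence the Zbăganu ratio of `(x, y)` equals `4 / (1 + η²)` times
the ratio defining `C_Z^I(t)` at `(u, v)`; this bounds the right-hand side by `C_Z(X)`.
Conversely, every pair `(x, y)` with `‖y‖ ≤ ‖x‖` arises this way with `η = ‖y‖ / ‖x‖ ∈ [0, 1]`:
take `b` on the ray of `y` with `‖b‖ = ‖x‖` and `u, v = (x ± b) / 2`. Since the Zbăganu ratio
is symmetric in `x` and `y`, this gives the reverse inequality.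
-/

section Seminormed

variable {X : Type*} [SeminormedAddCommGroup X]

noncomputable def zbaganuRatio (x y : X) : ℝ :=
  ‖x + y‖ * ‖x - y‖ / (‖x‖ ^ 2 + ‖y‖ ^ 2)

lemma zbaganuRatio_comm (x y : X) : zbaganuRatio x y = zbaganuRatio y x := by
  rw [zbaganuRatio, zbaganuRatio, add_comm y, norm_sub_rev y, add_comm (‖y‖ ^ 2)]

lemma zbaganuRatio_le_two (x y : X) : zbaganuRatio x y ≤ 2 := by
  refine div_le_of_le_mul₀ (by positivity) zero_le_two ?_
  nlinarith [norm_add_le x y, norm_sub_le x y, sq_nonneg (‖x‖ - ‖y‖),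
    norm_nonneg x, norm_nonneg y, norm_nonneg (x + y), norm_nonneg (x - y)]

variable [NormedSpace ℝ X]

noncomputable def isoscelesRatio (t : ℝ) (x y : X) : ℝ :=
  ‖t • x + (1 - t) • y‖ * ‖(1 - t) • x + t • y‖ / ‖x + y‖ ^ 2

lemma zbaganuRatio_add_smul_sub {u v : X} (h : ‖u + v‖ = ‖u - v‖) (η : ℝ) :
    zbaganuRatio (u + v) (η • (u - v)) = 4 * isoscelesRatio ((1 - η) / 2) u v / (1 + η ^ 2) := by
  have hadd : u + v + η • (u - v) = (2 : ℝ) • ((1 - (1 - η) / 2) • u + ((1 - η) / 2) • v) := by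
    module
  have hsub : u + v - η • (u - v) = (2 : ℝ) • (((1 - η) / 2) • u + (1 - (1 - η) / 2) • v) := by
    module
  have hnorm : ‖η • (u - v)‖ ^ 2 = η ^ 2 * ‖u + v‖ ^ 2 := by
    rw [norm_smul, ← h, mul_pow, Real.norm_eq_abs, sq_abs]
  rw [zbaganuRatio, isoscelesRatio, hadd, hsub, hnorm, norm_smul, norm_smul, Real.norm_two,
    show ‖u + v‖ ^ 2 + η ^ 2 * ‖u + v‖ ^ 2 = ‖u + v‖ ^ 2 * (1 + η ^ 2) by ring, ← div_div]
  ring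

end Seminormed

section Normed

variable {X : Type*} [NormedAddCommGroup X] [NormedSpace ℝ X]

lemma CZ_nonneg : 0 ≤ CZ X :=
  Real.sSup_nonneg <| by rintro _ ⟨x, y, -, rfl⟩; positivity

lemma zbaganuRatio_le_CZ (x y : X) : zbaganuRatio x y ≤ CZ X := by
  by_cases hxy : (x, y) = (0, 0)
  · simp only [Prod.mk.injEq] at hxy
    simpa [zbaganuRatio, hxy.1, hxy.2] using CZ_nonneg
  · refine le_csSup ⟨2, ?_⟩ ⟨x, y, hxy, rfl⟩
    rintro _ ⟨x', y', -, rfl⟩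
    exact zbaganuRatio_le_two x' y'

lemma isoscelesRatio_le_CZ {u v : X} (h : ‖u + v‖ = ‖u - v‖) (η : ℝ) :
    isoscelesRatio ((1 - η) / 2) u v ≤ CZ X * (1 + η ^ 2) / 4 := by
  have := zbaganuRatio_le_CZ (u + v) (η • (u - v))
  rw [zbaganuRatio_add_smul_sub h, div_le_iff₀ (by positivity)] at this
  linarith

lemma CZI_nonneg (t : ℝ) : 0 ≤ CZI X t :=
  Real.sSup_nonneg <| by rintro _ ⟨x, y, -, -, rfl⟩; positivity

lemma four_mul_CZI_div_le_CZ (η : ℝ) : 4 * CZI X ((1 - η) / 2) / (1 + η ^ 2) ≤ CZ X := by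
  have : CZI X ((1 - η) / 2) ≤ CZ X * (1 + η ^ 2) / 4 :=
    Real.sSup_le (by rintro _ ⟨u, v, -, h, rfl⟩; exact isoscelesRatio_le_CZ h η)
      (by have := CZ_nonneg (X := X); positivity)
  rw [div_le_iff₀ (by positivity)]
  linarith

lemma isoscelesRatio_le_CZI (t : ℝ) {u v : X} (h : ‖u + v‖ = ‖u - v‖) :
    isoscelesRatio t u v ≤ CZI X t := by
  by_cases huv : (u, v) = (0, 0)
  · simp only [Prod.mk.injEq] at huv
    simpa [isoscelesRatio, huv.1, huv.2] using CZI_nonneg t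
  · refine le_csSup ⟨CZ X * (1 + (1 - 2 * t) ^ 2) / 4, ?_⟩ ⟨u, v, huv, h, rfl⟩
    rintro _ ⟨u', v', -, h', rfl⟩
    have := isoscelesRatio_le_CZ h' (1 - 2 * t)
    rwa [show (1 - (1 - 2 * t)) / 2 = t by ring] at this

lemma exists_isosceles_add_smul_sub {x y : X} (hyx : ‖y‖ ≤ ‖x‖) :
    ∃ u v : X, ∃ η ∈ Icc (0 : ℝ) 1, ‖u + v‖ = ‖u - v‖ ∧ u + v = x ∧ η • (u - v) = y := by
  by_cases hy : y = 0
  · exact ⟨x, 0, 0, ⟨le_rfl, zero_le_one⟩, by simp, by simp, by simp [hy]⟩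
  have hy' : 0 < ‖y‖ := norm_pos_iff.mpr hy
  have hx : 0 < ‖x‖ := hy'.trans_le hyx
  set b : X := (‖x‖ / ‖y‖) • y
  have hb : ‖b‖ = ‖x‖ := by
    rw [norm_smul, Real.norm_of_nonneg (by positivity)]
    field_simp
  have hsub : (2⁻¹ : ℝ) • (x + b) - (2⁻¹ : ℝ) • (x - b) = b := by module
  refine ⟨(2⁻¹ : ℝ) • (x + b), (2⁻¹ : ℝ) • (x - b), ‖y‖ / ‖x‖,
    ⟨by positivity, (div_le_one hx).mpr hyx⟩, ?_, by module, ?_⟩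
  · rw [show (2⁻¹ : ℝ) • (x + b) + (2⁻¹ : ℝ) • (x - b) = x by module, hsub, hb]
  · rw [hsub, smul_smul, div_mul_div_cancel₀ hx.ne', div_self hy'.ne', one_smul]

lemma exists_zbaganuRatio_le_CZI {x y : X} (hyx : ‖y‖ ≤ ‖x‖) :
    ∃ η ∈ Icc (0 : ℝ) 1, zbaganuRatio x y ≤ 4 * CZI X ((1 - η) / 2) / (1 + η ^ 2) := by
  obtain ⟨u, v, η, hη, h, rfl, rfl⟩ := exists_isosceles_add_smul_sub hyx
  refine ⟨η, hη, ?_⟩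
  rw [zbaganuRatio_add_smul_sub h]
  gcongr
  exact isoscelesRatio_le_CZI _ h

end Normed

theorem stmt_7_general (X : Type*) [NormedAddCommGroup X] [NormedSpace ℝ X] :
    CZ X = sSup { r : ℝ | ∃ η ∈ Icc (0 : ℝ) 1,
      r = 4 * CZI X ((1 - η) / 2) / (1 + η ^ 2) } := by
  set T := { r : ℝ | ∃ η ∈ Icc (0 : ℝ) 1, r = 4 * CZI X ((1 - η) / 2) / (1 + η ^ 2) }
  have hbdd : BddAbove T := ⟨CZ X, by rintro _ ⟨η, -, rfl⟩; exact four_mul_CZI_div_le_CZ η⟩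
  have hle {x y : X} (hyx : ‖y‖ ≤ ‖x‖) : zbaganuRatio x y ≤ sSup T := by
    obtain ⟨η, hη, hxy⟩ := exists_zbaganuRatio_le_CZI hyx
    exact hxy.trans (le_csSup hbdd ⟨η, hη, rfl⟩)
  refine le_antisymm (Real.sSup_le ?_ (Real.sSup_nonneg ?_)) (Real.sSup_le ?_ CZ_nonneg)
  · rintro _ ⟨x, y, -, rfl⟩
    rcases le_total ‖y‖ ‖x‖ with hyx | hxy
    · exact hle hyx
    · exact (zbaganuRatio_comm x y).trans_le (hle hxy)
  · rintro _ ⟨η, -, rfl⟩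
    have := CZI_nonneg (X := X) ((1 - η) / 2)
    positivity
  · rintro _ ⟨η, -, rfl⟩
    exact four_mul_CZI_div_le_CZ η

theorem stmt_7 (X : Type*) [NormedAddCommGroup X] [NormedSpace ℝ X]
    [CompleteSpace X] [Nontrivial X] :
    CZ X = sSup { r : ℝ | ∃ η ∈ Icc (0 : ℝ) 1,
      r = 4 * CZI X ((1 - η) / 2) / (1 + η ^ 2) } :=
  stmt_7_general X
end

section
/- Let X be a nontrivial real Banach space. If lim_{t→0⁺} (Z_X(t) − 1/2)/t = 0, then X is uniformly smooth, i.e., lim_{t→0⁺} ρ_X(t)/t = 0. -/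
/-!
With `a = ‖x + t•y‖` and `b = ‖x - t•y‖` for unit vectors `x, y`, the triangle inequality gives
`|a - b| ≤ 2t`, so `(a + b)² ≤ 4t² + 4ab`, and AM–GM `s - 1 ≤ (s² - 1)/2` applied to `s = (a + b)/2`
yields `(a + b)/2 - 1 ≤ t²/2 + (ab/2 - 1/2)`. Taking suprema, `ρ_X(t) ≤ t²/2 + (Z_X(t) - 1/2)`;
dividing by `t` and letting `t → 0⁺` squeezes `ρ_X(t)/t` between `0` and a quantity tending to `0`.
-/

open Set Filter

/-- `Z_X(t)`: the sup of `‖x + t•y‖ * ‖x - t•y‖ / 2` over unit vectors `x, y`. -/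
noncomputable def ZX (X : Type*) [NormedAddCommGroup X] [NormedSpace ℝ X] (t : ℝ) : ℝ :=
  sSup { r : ℝ | ∃ x y : X, ‖x‖ = 1 ∧ ‖y‖ = 1 ∧ r = ‖x + t • y‖ * ‖x - t • y‖ / 2 }

/-- The modulus of smoothness `ρ_X(t)`. -/
noncomputable def rhoX (X : Type*) [NormedAddCommGroup X] [NormedSpace ℝ X] (t : ℝ) : ℝ :=
  sSup { r : ℝ | ∃ x y : X, ‖x‖ = 1 ∧ ‖y‖ = 1 ∧
    r = (‖x + t • y‖ + ‖x - t • y‖) / 2 - 1 }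

lemma half_add_sub_one_le_of_abs_sub_le {a b t : ℝ} (h : |a - b| ≤ 2 * |t|) :
    (a + b) / 2 - 1 ≤ t ^ 2 / 2 + (a * b / 2 - 1 / 2) := by
  have hsq : (a - b) ^ 2 ≤ 4 * t ^ 2 := by
    rw [← sq_abs (a - b), ← sq_abs t]
    nlinarith [abs_nonneg (a - b)]
  nlinarith [sq_nonneg ((a + b) / 2 - 1)]

section NormedSpace

variable {E : Type*} [NormedAddCommGroup E] [NormedSpace ℝ E]

lemma abs_norm_add_smul_sub_norm_sub_smul_le (x y : E) (t : ℝ) :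
    |‖x + t • y‖ - ‖x - t • y‖| ≤ 2 * |t| * ‖y‖ := by
  calc |‖x + t • y‖ - ‖x - t • y‖| ≤ ‖(x + t • y) - (x - t • y)‖ := abs_norm_sub_norm_le _ _
    _ = ‖(2 * t) • y‖ := by rw [mul_smul, two_smul]; abel_nf
    _ = 2 * |t| * ‖y‖ := by rw [norm_smul, Real.norm_eq_abs, abs_mul, abs_two]

lemma two_mul_norm_le_norm_add_add_norm_sub (x v : E) : 2 * ‖x‖ ≤ ‖x + v‖ + ‖x - v‖ := by
  calc 2 * ‖x‖ = ‖(x + v) + (x - v)‖ := by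
        rw [add_add_sub_cancel, ← two_smul ℝ x, norm_smul, Real.norm_two]
    _ ≤ ‖x + v‖ + ‖x - v‖ := norm_add_le _ _

lemma norm_add_smul_le_one_add_abs {x y : E} (hx : ‖x‖ = 1) (hy : ‖y‖ = 1) (t : ℝ) :
    ‖x + t • y‖ ≤ 1 + |t| := by
  simpa [hx, hy, norm_smul] using norm_add_le x (t • y)

lemma norm_sub_smul_le_one_add_abs {x y : E} (hx : ‖x‖ = 1) (hy : ‖y‖ = 1) (t : ℝ) :
    ‖x - t • y‖ ≤ 1 + |t| := by
  simpa [hx, hy, norm_smul] using norm_sub_le x (t • y)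

lemma le_ZX {x y : E} (hx : ‖x‖ = 1) (hy : ‖y‖ = 1) (t : ℝ) :
    ‖x + t • y‖ * ‖x - t • y‖ / 2 ≤ ZX E t := by
  refine le_csSup ⟨(1 + |t|) * (1 + |t|) / 2, ?_⟩ ⟨x, y, hx, hy, rfl⟩
  rintro r ⟨x', y', hx', hy', rfl⟩
  gcongr
  exacts [norm_add_smul_le_one_add_abs hx' hy' t, norm_sub_smul_le_one_add_abs hx' hy' t]

lemma le_rhoX {x y : E} (hx : ‖x‖ = 1) (hy : ‖y‖ = 1) (t : ℝ) :
    (‖x + t • y‖ + ‖x - t • y‖) / 2 - 1 ≤ rhoX E t := by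
  refine le_csSup ⟨|t|, ?_⟩ ⟨x, y, hx, hy, rfl⟩
  rintro r ⟨x', y', hx', hy', rfl⟩
  linarith [norm_add_smul_le_one_add_abs hx' hy' t, norm_sub_smul_le_one_add_abs hx' hy' t]

variable [Nontrivial E]

lemma rhoX_nonneg (t : ℝ) : 0 ≤ rhoX E t := by
  obtain ⟨x, hx⟩ := exists_norm_eq E zero_le_one
  have := two_mul_norm_le_norm_add_add_norm_sub x (t • x)
  linarith [le_rhoX hx hx t]

lemma rhoX_le_sq_div_two_add_ZX (t : ℝ) : rhoX E t ≤ t ^ 2 / 2 + (ZX E t - 1 / 2) := by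
  obtain ⟨x, hx⟩ := exists_norm_eq E zero_le_one
  refine csSup_le ⟨_, x, x, hx, hx, rfl⟩ ?_
  rintro r ⟨x, y, hx, hy, rfl⟩
  have hdiff := abs_norm_add_smul_sub_norm_sub_smul_le x y t
  rw [hy, mul_one] at hdiff
  linarith [half_add_sub_one_le_of_abs_sub_le hdiff, le_ZX hx hy t]

end NormedSpace

theorem stmt_13_general (X : Type*) [NormedAddCommGroup X] [NormedSpace ℝ X]
    [Nontrivial X]
    (h : Tendsto (fun t : ℝ => (ZX X t - 1 / 2) / t) (nhdsWithin 0 (Ioi 0)) (nhds 0)) :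
    Tendsto (fun t : ℝ => rhoX X t / t) (nhdsWithin 0 (Ioi 0)) (nhds 0) := by
  have half_tendsto : Tendsto (fun t : ℝ => t / 2) (nhdsWithin 0 (Ioi 0)) (nhds 0) := by
    exact tendsto_nhdsWithin_of_tendsto_nhds ((continuous_id.div_const 2).tendsto' 0 0 (by simp))
  refine squeeze_zero' (g := fun t => t / 2 + (ZX X t - 1 / 2) / t) ?_ ?_
    (by simpa using half_tendsto.add h)
  · filter_upwards [self_mem_nhdsWithin] with t (ht : 0 < t)
    exact div_nonneg (rhoX_nonneg t) ht.le
  · filter_upwards [self_mem_nhdsWithin] with t (ht : 0 < t)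
    calc rhoX X t / t ≤ (t ^ 2 / 2 + (ZX X t - 1 / 2)) / t := by
          gcongr; exact rhoX_le_sq_div_two_add_ZX t
      _ = t / 2 + (ZX X t - 1 / 2) / t := by field_simp

theorem stmt_13 (X : Type*) [NormedAddCommGroup X] [NormedSpace ℝ X]
    [CompleteSpace X] [Nontrivial X]
    (h : Tendsto (fun t : ℝ => (ZX X t - 1 / 2) / t) (nhdsWithin 0 (Ioi 0)) (nhds 0)) :
    Tendsto (fun t : ℝ => rhoX X t / t) (nhdsWithin 0 (Ioi 0)) (nhds 0) :=
  stmt_13_general X h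
end
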